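/- arXiv:1505.03123 — 2 statements merged into one kernel-verified Lean document; each statement's English description precedes it below -/
import Mathlib

section
/- Let g̃ be a smooth Lorentzian metric on an open set M ⊂ ℝⁿ, let a : M → (0,∞) be smooth, and set g = a² g̃. Let c : M → ℝ be smooth and let ω be a smooth 1-form on M. Then a⁻²(c g + d^s ω) = c̃ g̃ + d̃^s ω̃ as symmetric 2-tensor fields, where ω̃ = a⁻² ω and c̃ = c + Σ_{i,j} g̃^{ij} ω̃_i ∂_{x^j}(log a), and where d^s and d̃^s denote the symmetric differentials with respect to g and g̃ respectively. -/
noncomputable section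

/-- Partial derivative `∂_{x^i} f (x)` of a scalar function on `ℝⁿ`. -/
def pd {n : ℕ} (i : Fin n) (f : (Fin n → ℝ) → ℝ) (x : Fin n → ℝ) : ℝ :=
  fderiv ℝ f x (Pi.single i 1)

/-- Christoffel symbols `Γ^k_{ij}` of a metric `g`, using the matrix inverse `(g x)⁻¹`. -/
def christoffel {n : ℕ} (g : (Fin n → ℝ) → Matrix (Fin n) (Fin n) ℝ)
    (k i j : Fin n) (x : Fin n → ℝ) : ℝ :=
  (1 / 2) * ∑ m, (g x)⁻¹ k m *
    (pd i (fun y => g y m j) x + pd j (fun y => g y m i) x - pd m (fun y => g y i j) x)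

/-- The diagonal matrix `diag(-1, 1, …, 1)`. -/
def minkMat (n : ℕ) : Matrix (Fin n) (Fin n) ℝ :=
  Matrix.diagonal (fun i => if (i : ℕ) = 0 then (-1 : ℝ) else 1)

/-- `g` is a smooth Lorentzian metric on the open set `M ⊆ ℝⁿ`: smooth, symmetric,
invertible, and of signature `(-,+,…,+)` (i.e. congruent to `diag(-1,1,…,1)`). -/
def IsLorentzMetricOn {n : ℕ} (M : Set (Fin n → ℝ))
    (g : (Fin n → ℝ) → Matrix (Fin n) (Fin n) ℝ) : Prop :=
  (∀ i j, ContDiffOn ℝ (⊤ : ℕ∞) (fun x => g x i j) M) ∧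
  (∀ x ∈ M, (g x).IsSymm) ∧
  (∀ x ∈ M, IsUnit (g x).det) ∧
  (∀ x ∈ M, ∃ P : Matrix (Fin n) (Fin n) ℝ, IsUnit P.det ∧ g x = P.transpose * minkMat n * P)

/-- The symmetric differential `(d^s ω)_{ij} = ½(∂_i ω_j + ∂_j ω_i) − Γ^k_{ij} ω_k`
of a 1-form `ω` with respect to the metric `g`. -/
def symDer {n : ℕ} (g : (Fin n → ℝ) → Matrix (Fin n) (Fin n) ℝ)
    (ω : Fin n → (Fin n → ℝ) → ℝ) (i j : Fin n) (x : Fin n → ℝ) : ℝ :=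
  (1 / 2) * (pd i (ω j) x + pd j (ω i) x) - ∑ k, christoffel g k i j x * ω k x

/-!
With `φ = log a`, the Christoffel symbols of `g = a² g̃` are those of `g̃` plus
`δ^k_i ∂_jφ + δ^k_j ∂_iφ − g̃_ij g̃^{km} ∂_mφ`. Contracted with `ω`, the two `δ` terms cancel
against the derivative of the factor `a⁻²` in `ω̃ = a⁻² ω`, and the term proportional to `g̃_ij`
is what turns `c` into `c̃`.
-/

section ConformalChange

variable {n : ℕ}

theorem pd_mul (i : Fin n) {f h : (Fin n → ℝ) → ℝ} {x : Fin n → ℝ}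
    (hf : DifferentiableAt ℝ f x) (hh : DifferentiableAt ℝ h x) :
    pd i (fun y => f y * h y) x = pd i f x * h x + f x * pd i h x := by
  simp [pd, fderiv_fun_mul hf hh, add_comm, mul_comm]

theorem pd_comp_of_hasDerivAt (i : Fin n) {h : ℝ → ℝ} {h' : ℝ} {f : (Fin n → ℝ) → ℝ}
    {x : Fin n → ℝ} (hh : HasDerivAt h h' (f x)) (hf : DifferentiableAt ℝ f x) :
    pd i (fun y => h (f y)) x = h' * pd i f x := by
  have hcomp : HasFDerivAt (fun y => h (f y)) (h' • fderiv ℝ f x) x :=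
    hh.comp_hasFDerivAt x hf.hasFDerivAt
  simp [pd, hcomp.fderiv]

theorem pd_log (i : Fin n) {f : (Fin n → ℝ) → ℝ} {x : Fin n → ℝ}
    (hf : DifferentiableAt ℝ f x) (hfx : f x ≠ 0) :
    pd i (fun y => Real.log (f y)) x = (f x)⁻¹ * pd i f x :=
  pd_comp_of_hasDerivAt i (Real.hasDerivAt_log hfx) hf

theorem pd_sq_eq_mul_pd_log (i : Fin n) {f : (Fin n → ℝ) → ℝ} {x : Fin n → ℝ}
    (hf : DifferentiableAt ℝ f x) (hfx : f x ≠ 0) :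
    pd i (fun y => f y ^ 2) x = 2 * f x ^ 2 * pd i (fun y => Real.log (f y)) x := by
  rw [pd_comp_of_hasDerivAt i (hasDerivAt_pow 2 (f x)) hf, pd_log i hf hfx]
  field_simp
  ring

theorem pd_inv_sq_eq_mul_pd_log (i : Fin n) {f : (Fin n → ℝ) → ℝ} {x : Fin n → ℝ}
    (hf : DifferentiableAt ℝ f x) (hfx : f x ≠ 0) :
    pd i (fun y => (f y ^ 2)⁻¹) x = -2 * (f x ^ 2)⁻¹ * pd i (fun y => Real.log (f y)) x := by
  rw [pd_comp_of_hasDerivAt (h := fun t => (t ^ 2)⁻¹) i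
    ((hasDerivAt_pow 2 (f x)).fun_inv (pow_ne_zero 2 hfx)) hf, pd_log i hf hfx]
  field_simp
  ring

theorem symDer_mul_left (g : (Fin n → ℝ) → Matrix (Fin n) (Fin n) ℝ) {f : (Fin n → ℝ) → ℝ}
    {ω : Fin n → (Fin n → ℝ) → ℝ} {x : Fin n → ℝ} (hf : DifferentiableAt ℝ f x)
    (hω : ∀ k, DifferentiableAt ℝ (ω k) x) (i j : Fin n) :
    symDer g (fun k y => f y * ω k y) i j x
      = f x * symDer g ω i j x + (1 / 2) * (pd i f x * ω j x + pd j f x * ω i x) := by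
  have hsum : ∑ k, christoffel g k i j x * (f x * ω k x)
      = f x * ∑ k, christoffel g k i j x * ω k x := by
    rw [Finset.mul_sum]
    exact Finset.sum_congr rfl fun k _ => by ring
  simp only [symDer, pd_mul _ hf (hω _), hsum]
  ring

theorem christoffel_conformal {gt : (Fin n → ℝ) → Matrix (Fin n) (Fin n) ℝ}
    {a : (Fin n → ℝ) → ℝ} {x : Fin n → ℝ} (ha : DifferentiableAt ℝ a x) (hax : a x ≠ 0)
    (hgt : ∀ p q, DifferentiableAt ℝ (fun y => gt y p q) x) (hdet : IsUnit (gt x).det)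
    (k i j : Fin n) :
    christoffel (fun y => a y ^ 2 • gt y) k i j x = christoffel gt k i j x
      + (pd i (fun y => Real.log (a y)) x * (1 : Matrix (Fin n) (Fin n) ℝ) k j
        + pd j (fun y => Real.log (a y)) x * (1 : Matrix (Fin n) (Fin n) ℝ) k i
        - gt x i j * ∑ m, (gt x)⁻¹ k m * pd m (fun y => Real.log (a y)) x) := by
  set φ := fun y => Real.log (a y)
  have hinv : (a x ^ 2 • gt x)⁻¹ = (a x ^ 2)⁻¹ • (gt x)⁻¹ :=
    Matrix.inv_smul' _ (Units.mk0 _ (pow_ne_zero 2 hax)) hdet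
  have hpd : ∀ l p q, pd l (fun y => (a y ^ 2 • gt y) p q) x
      = a x ^ 2 * (2 * pd l φ x * gt x p q + pd l (fun y => gt y p q) x) := by
    intro l p q
    simp only [Matrix.smul_apply, smul_eq_mul]
    rw [pd_mul (f := fun y => a y ^ 2) _ (ha.pow 2) (hgt p q), pd_sq_eq_mul_pd_log _ ha hax]
    ring
  have hδ : ∀ l, ∑ m, (gt x)⁻¹ k m * gt x m l = (1 : Matrix (Fin n) (Fin n) ℝ) k l := fun l => by
    rw [← Matrix.mul_apply, Matrix.nonsing_inv_mul _ hdet]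
  have hterm : ∀ m, (a x ^ 2 • gt x)⁻¹ k m * (pd i (fun y => (a y ^ 2 • gt y) m j) x
        + pd j (fun y => (a y ^ 2 • gt y) m i) x - pd m (fun y => (a y ^ 2 • gt y) i j) x)
      = (gt x)⁻¹ k m * (pd i (fun y => gt y m j) x + pd j (fun y => gt y m i) x
          - pd m (fun y => gt y i j) x)
        + 2 * (pd i φ x * ((gt x)⁻¹ k m * gt x m j) + pd j φ x * ((gt x)⁻¹ k m * gt x m i)
          - gt x i j * ((gt x)⁻¹ k m * pd m φ x)) := by
    intro m
    rw [hinv, Matrix.smul_apply, smul_eq_mul, hpd, hpd, hpd]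
    field_simp
    ring
  simp only [christoffel, hterm, Finset.sum_add_distrib, Finset.sum_sub_distrib,
    ← Finset.mul_sum, hδ]
  ring

theorem symDer_conformal {gt : (Fin n → ℝ) → Matrix (Fin n) (Fin n) ℝ}
    {a : (Fin n → ℝ) → ℝ} {ω : Fin n → (Fin n → ℝ) → ℝ} {x : Fin n → ℝ}
    (ha : DifferentiableAt ℝ a x) (hax : a x ≠ 0)
    (hgt : ∀ p q, DifferentiableAt ℝ (fun y => gt y p q) x) (hdet : IsUnit (gt x).det)
    (i j : Fin n) :
    symDer (fun y => a y ^ 2 • gt y) ω i j x = symDer gt ω i j x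
      - (pd i (fun y => Real.log (a y)) x * ω j x + pd j (fun y => Real.log (a y)) x * ω i x)
      + gt x i j * ∑ k, ∑ m, (gt x)⁻¹ k m * ω k x * pd m (fun y => Real.log (a y)) x := by
  have hcontr : ∀ k, christoffel (fun y => a y ^ 2 • gt y) k i j x * ω k x
      = christoffel gt k i j x * ω k x
        + pd i (fun y => Real.log (a y)) x * ((1 : Matrix (Fin n) (Fin n) ℝ) k j * ω k x)
        + pd j (fun y => Real.log (a y)) x * ((1 : Matrix (Fin n) (Fin n) ℝ) k i * ω k x)
        - gt x i j * ∑ m, (gt x)⁻¹ k m * ω k x * pd m (fun y => Real.log (a y)) x := by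
    intro k
    have hsum : ∑ m, (gt x)⁻¹ k m * ω k x * pd m (fun y => Real.log (a y)) x
        = (∑ m, (gt x)⁻¹ k m * pd m (fun y => Real.log (a y)) x) * ω k x := by
      rw [Finset.sum_mul]
      exact Finset.sum_congr rfl fun m _ => by ring
    rw [christoffel_conformal ha hax hgt hdet, hsum]
    ring
  simp only [symDer, hcontr, Finset.sum_add_distrib, Finset.sum_sub_distrib, ← Finset.mul_sum,
    Matrix.one_apply, ite_mul, one_mul, zero_mul, Finset.sum_ite_eq', Finset.mem_univ, if_true]
  ring

end ConformalChange

theorem symDer_conformal_scaling_general {n : ℕ} (M : Set (Fin n → ℝ)) (hM : IsOpen M)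
    (gt : (Fin n → ℝ) → Matrix (Fin n) (Fin n) ℝ)
    (hgt : IsLorentzMetricOn M gt)
    (a : (Fin n → ℝ) → ℝ) (ha : ContDiffOn ℝ (⊤ : ℕ∞) a M) (hapos : ∀ x ∈ M, 0 < a x)
    (g : (Fin n → ℝ) → Matrix (Fin n) (Fin n) ℝ)
    (hg : ∀ x, g x = (a x) ^ 2 • gt x)
    (c : (Fin n → ℝ) → ℝ)
    (ω : Fin n → (Fin n → ℝ) → ℝ) (hω : ∀ i, ContDiffOn ℝ (⊤ : ℕ∞) (ω i) M)
    (ωt : Fin n → (Fin n → ℝ) → ℝ) (hωt : ∀ i x, ωt i x = ((a x) ^ 2)⁻¹ * ω i x)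
    (ct : (Fin n → ℝ) → ℝ)
    (hct : ∀ x, ct x = c x + ∑ i, ∑ j, (gt x)⁻¹ i j * ωt i x *
      pd j (fun y => Real.log (a y)) x) :
    ∀ x ∈ M, ∀ i j,
      ((a x) ^ 2)⁻¹ * (c x * g x i j + symDer g ω i j x)
        = ct x * gt x i j + symDer gt ωt i j x := by
  intro x hx i j
  obtain ⟨hgt_smooth, -, hgt_det, -⟩ := hgt
  obtain rfl : g = fun y => a y ^ 2 • gt y := funext hg
  obtain rfl : ωt = fun k y => (a y ^ 2)⁻¹ * ω k y := funext fun k => funext (hωt k)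
  have hdiff {f : (Fin n → ℝ) → ℝ} (hf : ContDiffOn ℝ (⊤ : ℕ∞) f M) : DifferentiableAt ℝ f x :=
    (hf.contDiffAt (hM.mem_nhds hx)).differentiableAt (by simp)
  have hax : a x ≠ 0 := (hapos x hx).ne'
  have hsum : ∑ k, ∑ m, (gt x)⁻¹ k m * ((a x ^ 2)⁻¹ * ω k x) * pd m (fun y => Real.log (a y)) x
      = (a x ^ 2)⁻¹ * ∑ k, ∑ m, (gt x)⁻¹ k m * ω k x * pd m (fun y => Real.log (a y)) x := by
    simp only [Finset.mul_sum]
    exact Finset.sum_congr rfl fun _ _ => Finset.sum_congr rfl fun _ _ => by ring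
  rw [symDer_conformal (hdiff ha) hax (fun p q => hdiff (hgt_smooth p q)) (hgt_det x hx),
    symDer_mul_left gt (f := fun y => (a y ^ 2)⁻¹) (((hdiff ha).pow 2).inv (pow_ne_zero 2 hax))
      (fun k => hdiff (hω k)),
    pd_inv_sq_eq_mul_pd_log _ (hdiff ha) hax, pd_inv_sq_eq_mul_pd_log _ (hdiff ha) hax, hct, hsum]
  simp only [Matrix.smul_apply, smul_eq_mul]
  field_simp
  ring

/-- Let `g̃` be a smooth Lorentzian metric on an open `M ⊆ ℝⁿ`,
`a : M → (0,∞)` smooth, and `g = a² g̃`. For a smooth function `c` and smooth 1-form `ω`,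
`a⁻²(c g + d^s ω) = c̃ g̃ + d̃^s ω̃` where `ω̃ = a⁻² ω` and
`c̃ = c + g̃^{ij} ω̃_i ∂_j (log a)`. -/
theorem symDer_conformal_scaling {n : ℕ} (M : Set (Fin n → ℝ)) (hM : IsOpen M)
    (gt : (Fin n → ℝ) → Matrix (Fin n) (Fin n) ℝ)
    (hgt : IsLorentzMetricOn M gt)
    (a : (Fin n → ℝ) → ℝ) (ha : ContDiffOn ℝ (⊤ : ℕ∞) a M) (hapos : ∀ x ∈ M, 0 < a x)
    (g : (Fin n → ℝ) → Matrix (Fin n) (Fin n) ℝ)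
    (hg : ∀ x, g x = (a x) ^ 2 • gt x)
    (c : (Fin n → ℝ) → ℝ) (hc : ContDiffOn ℝ (⊤ : ℕ∞) c M)
    (ω : Fin n → (Fin n → ℝ) → ℝ) (hω : ∀ i, ContDiffOn ℝ (⊤ : ℕ∞) (ω i) M)
    (ωt : Fin n → (Fin n → ℝ) → ℝ) (hωt : ∀ i x, ωt i x = ((a x) ^ 2)⁻¹ * ω i x)
    (ct : (Fin n → ℝ) → ℝ)
    (hct : ∀ x, ct x = c x + ∑ i, ∑ j, (gt x)⁻¹ i j * ωt i x *
      pd j (fun y => Real.log (a y)) x) :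
    ∀ x ∈ M, ∀ i j,
      ((a x) ^ 2)⁻¹ * (c x * g x i j + symDer g ω i j x)
        = ct x * gt x i j + symDer gt ωt i j x :=
  symDer_conformal_scaling_general M hM gt hgt a ha hapos g hg c ω hω ωt hωt ct hct
end
end

section
/- For all compactly supported smooth symmetric 2-tensor fields f = (f_{lm}) and h = (h_{jk}) on ℝ⁴, the L² pairing of their light ray transforms satisfies ∫_{S²} ∫_{ℝ³} Lf(y,v) · Lh(y,v) dy dℋ²(v) = ∫_{S²} ∫_ℝ ∫_{ℝ⁴} Σ_{j,k,l,m} f_{lm}(x⁰ − ρ, x' − ρ v) h_{jk}(x) θ^j θ^k θ^l θ^m dx dρ dℋ²(v), where θ = (1,v) and ℋ² is the surface measure on S². -/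
/-!
For a fixed direction `v`, the left-hand side is the integral of `F(s, y + s v) H(t, y + t v)` over
`(s, t, y) ∈ ℝ × ℝ × ℝ³`, where `F = f_{lm} θ^l θ^m` and `H = h_{jk} θ^j θ^k`. The shear
`(ρ, x⁰, x') = (t - s, t, y + t v)` preserves Lebesgue measure and turns this integrand into
`F(x⁰ - ρ, x' - ρ v) H(x)`, so Fubini's theorem on both sides gives the identity.
-/

open MeasureTheory
open scoped Real

noncomputable section

/-- Euclidean `ℝ³`. -/
abbrev E3 := EuclideanSpace ℝ (Fin 3)

/-- Minkowski space `ℝ⁴ = ℝ × ℝ³`, points written `x = (x⁰, x')`. -/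
abbrev M4 := ℝ × E3

/-- The unit sphere `S² ⊆ ℝ³`. -/
def sphere2 : Set E3 := Metric.sphere 0 1

/-- The lightlike direction `θ = (1, v) ∈ ℝ⁴` as a 4-vector of components. -/
def thvec (v : E3) : Fin 4 → ℝ := Fin.cons 1 (fun i => v i)

/-- The components `(ξ₀, ξ')` of a covector as a 4-vector. -/
def xiVec (ξ : M4) : Fin 4 → ℝ := Fin.cons ξ.1 (fun i => ξ.2 i)

/-- The Minkowski metric `η = diag(-1,1,1,1)` (its own inverse). -/
def eta4 : Fin 4 → Fin 4 → ℝ := fun i j => if i = j then (if i = 0 then -1 else 1) else 0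

/-- The circle `S¹_ξ = {v ∈ S² : ξ₀ + ξ'·v = 0}`. -/
def S1xi (ξ : M4) : Set E3 := {v | ‖v‖ = 1 ∧ ξ.1 + (inner ℝ ξ.2 v : ℝ) = 0}

/-- The light ray transform of a symmetric 2-tensor field on `ℝ⁴`. -/
def Lray (f : Fin 4 → Fin 4 → M4 → ℝ) (y v : E3) : ℝ :=
  ∫ s : ℝ, ∑ l, ∑ m, f l m (s, y + s • v) * thvec v l * thvec v m

theorem HasCompactSupport.mul_prod {X Y β : Type*} [TopologicalSpace X] [TopologicalSpace Y]
    [MulZeroClass β] {F : X → β} {H : Y → β} (hF : HasCompactSupport F)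
    (hH : HasCompactSupport H) : HasCompactSupport fun p : X × Y => F p.1 * H p.2 := by
  refine .intro' (hF.prod hH) ((isClosed_tsupport F).prod (isClosed_tsupport H)) fun p hp => ?_
  rcases not_and_or.mp hp with hp | hp
  · simp [image_eq_zero_of_notMem_tsupport hp]
  · simp [image_eq_zero_of_notMem_tsupport hp]

theorem measurePreserving_sub_left_prod {G : Type*} [AddCommGroup G] [MeasurableSpace G]
    [MeasurableAdd₂ G] [MeasurableNeg G] (μ ν : Measure G) [SFinite μ] [SFinite ν]
    [μ.IsAddRightInvariant] [μ.IsNegInvariant] :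
    MeasurePreserving (fun z : G × G => (z.2 - z.1, z.2)) (μ.prod ν) (μ.prod ν) := by
  have hneg := (Measure.measurePreserving_neg μ).prod (MeasurePreserving.id ν)
  convert (measurePreserving_add_prod μ ν).comp hneg using 1
  ext z <;> simp [sub_eq_neg_add]

theorem MeasureTheory.MeasurePreserving.integral_comp_of_aestronglyMeasurable
    {α β G : Type*} [MeasurableSpace α] [MeasurableSpace β] [NormedAddCommGroup G]
    [NormedSpace ℝ G] {μ : Measure α} {ν : Measure β} {f : α → β}
    (hf : MeasurePreserving f μ ν) {g : β → G} (hg : AEStronglyMeasurable g ν) :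
    ∫ x, g (f x) ∂μ = ∫ y, g y ∂ν := by
  rw [← hf.map_eq] at hg ⊢
  exact (integral_map hf.aemeasurable hg).symm

section

variable {ι X : Type*} [Fintype ι]

def tensorEval (g : ι → ι → X → ℝ) (c : ι → ℝ) (x : X) : ℝ :=
  ∑ l, ∑ m, g l m x * c l * c m

theorem tensorEval_mul_tensorEval (f h : ι → ι → X → ℝ) (c : ι → ℝ) (x x' : X) :
    tensorEval f c x * tensorEval h c x' =
      ∑ j, ∑ k, ∑ l, ∑ m, f l m x * h j k x' * c j * c k * c l * c m := by
  simp only [tensorEval, Finset.sum_mul, Finset.mul_sum]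
  exact Finset.sum_congr rfl fun j _ => Finset.sum_congr rfl fun k _ =>
    Finset.sum_congr rfl fun l _ => Finset.sum_congr rfl fun m _ => by ring

variable [TopologicalSpace X]

theorem continuous_tensorEval {g : ι → ι → X → ℝ} (hg : ∀ l m, Continuous (g l m))
    (c : ι → ℝ) : Continuous (tensorEval g c) := by
  unfold tensorEval; fun_prop

theorem hasCompactSupport_tensorEval {g : ι → ι → X → ℝ} (hg : ∀ l m, HasCompactSupport (g l m))
    (c : ι → ℝ) : HasCompactSupport (tensorEval g c) := by
  have : tensorEval g c = ∑ l, ∑ m, fun x => g l m x * c l * c m := by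
    ext x; simp [tensorEval]
  rw [this]
  exact .finset_sum fun l _ => .finset_sum fun m _ => ((hg l m).mul_right).mul_right

end

def rayIntegral {E : Type*} [AddCommGroup E] [Module ℝ E] (F : ℝ × E → ℝ) (y v : E) : ℝ :=
  ∫ s, F (s, y + s • v)

section

variable {E : Type*} [NormedAddCommGroup E] [NormedSpace ℝ E] [FiniteDimensional ℝ E]
  [MeasureSpace E] [BorelSpace E] [(volume : Measure E).IsAddHaarMeasure]

theorem measurePreserving_rayShear (v : E) :
    MeasurePreserving (fun p : (ℝ × ℝ) × E => (p.1.2 - p.1.1, (p.1.2, p.2 + p.1.2 • v))) := by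
  have hskew : MeasurePreserving
      (fun p : (ℝ × ℝ) × E => ((p.1.2 - p.1.1, p.1.2), p.2 + p.1.2 • v)) :=
    (measurePreserving_sub_left_prod volume volume).skew_product
      (g := fun p y => y + p.2 • v) (by fun_prop)
      (ae_of_all _ fun p => map_add_right_eq_self _ _)
  exact (measurePreserving_prodAssoc volume volume volume).comp hskew

theorem integral_rayIntegral_mul_rayIntegral (v : E) {F H : ℝ × E → ℝ}
    (hFc : Continuous F) (hFs : HasCompactSupport F) (hHc : Continuous H)
    (hHs : HasCompactSupport H) :
    ∫ y, rayIntegral F y v * rayIntegral H y v =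
      ∫ ρ, ∫ x : ℝ × E, F (x.1 - ρ, x.2 - ρ • v) * H x := by
  have hemb : Topology.IsClosedEmbedding
      fun z : ℝ × (ℝ × E) => ((z.2.1 - z.1, z.2.2 - z.1 • v), z.2) :=
    Function.LeftInverse.isClosedEmbedding (f := fun p => (p.2.1 - p.1.1, p.2))
      (fun z => by simp) (by fun_prop) (by fun_prop)
  have hsupp := (hFs.mul_prod hHs).comp_isClosedEmbedding hemb
  have hint : Integrable fun z : ℝ × (ℝ × E) => F (z.2.1 - z.1, z.2.2 - z.1 • v) * H z.2 :=
    (by fun_prop : Continuous _).integrable_of_hasCompactSupport hsupp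
  have hshear := measurePreserving_rayShear v
  have hshift : ∀ p : (ℝ × ℝ) × E, p.2 + p.1.2 • v - (p.1.2 - p.1.1) • v = p.2 + p.1.1 • v :=
    fun p => by module
  have hint_rays := (hshear.integrable_comp hint.aestronglyMeasurable).2 hint
  simp only [Function.comp_def, sub_sub_cancel, hshift] at hint_rays
  calc ∫ y, rayIntegral F y v * rayIntegral H y v
      = ∫ y, ∫ st : ℝ × ℝ, F (st.1, y + st.1 • v) * H (st.2, y + st.2 • v) := by
        congr 1 with y
        exact (integral_prod_mul _ _).symm
    _ = ∫ p : (ℝ × ℝ) × E, F (p.1.1, p.2 + p.1.1 • v) * H (p.1.2, p.2 + p.1.2 • v) :=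
        (integral_prod_symm _ hint_rays).symm
    _ = ∫ z : ℝ × (ℝ × E), F (z.2.1 - z.1, z.2.2 - z.1 • v) * H z.2 := by
        simpa only [sub_sub_cancel, hshift] using
          hshear.integral_comp_of_aestronglyMeasurable hint.aestronglyMeasurable
    _ = ∫ ρ, ∫ x : ℝ × E, F (x.1 - ρ, x.2 - ρ • v) * H x := integral_prod _ hint

end

theorem lightRayTransform_pairing_general
    (f h : Fin 4 → Fin 4 → M4 → ℝ)
    (hfs : ∀ l m, ContDiff ℝ (⊤ : ℕ∞) (f l m)) (hfc : ∀ l m, HasCompactSupport (f l m))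
    (hhs : ∀ l m, ContDiff ℝ (⊤ : ℕ∞) (h l m)) (hhc : ∀ l m, HasCompactSupport (h l m)) :
    ∫ v in sphere2, (∫ y : E3, Lray f y v * Lray h y v) ∂μH[2]
      = ∫ v in sphere2,
          (∫ ρ : ℝ, ∫ x : M4, ∑ j, ∑ k, ∑ l, ∑ m,
            f l m (x.1 - ρ, x.2 - ρ • v) * h j k x *
              thvec v j * thvec v k * thvec v l * thvec v m) ∂μH[2] := by
  refine integral_congr_ae (ae_of_all _ fun v => ?_)
  simp only [← tensorEval_mul_tensorEval]
  exact integral_rayIntegral_mul_rayIntegral v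
    (continuous_tensorEval (fun l m => (hfs l m).continuous) _) (hasCompactSupport_tensorEval hfc _)
    (continuous_tensorEval (fun l m => (hhs l m).continuous) _) (hasCompactSupport_tensorEval hhc _)

/-- The `L²` pairing of light ray transforms:
`∫_{S²} ∫_{ℝ³} Lf·Lh dy dℋ²(v)
  = ∫_{S²} ∫_ℝ ∫_{ℝ⁴} Σ f_{lm}(x⁰−ρ, x'−ρv) h_{jk}(x) θ^j θ^k θ^l θ^m dx dρ dℋ²(v)`. -/
theorem lightRayTransform_pairing
    (f h : Fin 4 → Fin 4 → M4 → ℝ)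
    (hfs : ∀ l m, ContDiff ℝ (⊤ : ℕ∞) (f l m)) (hfc : ∀ l m, HasCompactSupport (f l m))
    (hfsym : ∀ l m, f l m = f m l)
    (hhs : ∀ l m, ContDiff ℝ (⊤ : ℕ∞) (h l m)) (hhc : ∀ l m, HasCompactSupport (h l m))
    (hhsym : ∀ l m, h l m = h m l) :
    ∫ v in sphere2, (∫ y : E3, Lray f y v * Lray h y v) ∂μH[2]
      = ∫ v in sphere2,
          (∫ ρ : ℝ, ∫ x : M4, ∑ j, ∑ k, ∑ l, ∑ m,
            f l m (x.1 - ρ, x.2 - ρ • v) * h j k x *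
              thvec v j * thvec v k * thvec v l * thvec v m) ∂μH[2] :=
  lightRayTransform_pairing_general f h hfs hfc hhs hhc
end
end
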